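/- For every 0<t<T and z>0, the bridge distribution function converges pointwise as c→∞: lim_{c→∞} F_{tT}(y;z) = 1 if Ty > tz, = 1/2 if Ty = tz, and = 0 if Ty < tz, for all y∈(0,z). -/

import Mathlib

open MeasureTheory Real Set Filter
open scoped Topology

noncomputable def stdNormalCDF (x : ℝ) : ℝ :=
  ∫ u in Set.Iic x, (Real.sqrt (2 * Real.pi))⁻¹ * Real.exp (-(u ^ 2) / 2)

noncomputable def bridgeCDF (c t T y z : ℝ) : ℝ :=
  stdNormalCDF (c * (T * y - t * z) / Real.sqrt (y * z * (z - y))) +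
    (1 - 2 * t / T) * Real.exp (2 * c ^ 2 * t * (T - t) / z) *
      stdNormalCDF (c * ((2 * t - T) * y - t * z) / Real.sqrt (y * z * (z - y)))

lemma gauss_integrable :
    Integrable (fun u : ℝ => (Real.sqrt (2 * Real.pi))⁻¹ * Real.exp (-(u ^ 2) / 2)) := by
  have h : (fun u : ℝ => (Real.sqrt (2 * Real.pi))⁻¹ * Real.exp (-(u ^ 2) / 2))
      = fun u : ℝ => (Real.sqrt (2 * Real.pi))⁻¹ * Real.exp (-(1/2 : ℝ) * u ^ 2) := by
    funext u
    rw [show -(u ^ 2) / 2 = -(1/2 : ℝ) * u ^ 2 by ring]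
  rw [h]
  exact (integrable_exp_neg_mul_sq (by norm_num : (0:ℝ) < 1/2)).const_mul _

lemma gauss_total :
    ∫ u : ℝ, (Real.sqrt (2 * Real.pi))⁻¹ * Real.exp (-(u ^ 2) / 2) = 1 := by
  have h : ∀ u : ℝ, Real.exp (-(u ^ 2) / 2) = Real.exp (-(1/2 : ℝ) * u ^ 2) := by
    intro u
    rw [show -(u ^ 2) / 2 = -(1/2 : ℝ) * u ^ 2 by ring]
  simp_rw [h, integral_const_mul, integral_gaussian]
  rw [show (Real.pi / (1/2 : ℝ)) = 2 * Real.pi by ring]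
  rw [inv_mul_cancel₀]
  exact Real.sqrt_ne_zero'.mpr (by positivity)

lemma stdNormalCDF_nonneg (x : ℝ) : 0 ≤ stdNormalCDF x :=
  setIntegral_nonneg measurableSet_Iic (fun u _ => by positivity)

lemma stdNormalCDF_neg_add (x : ℝ) : stdNormalCDF x + stdNormalCDF (-x) = 1 := by
  have h1 := integral_comp_neg_Iic x
    (fun u : ℝ => (Real.sqrt (2 * Real.pi))⁻¹ * Real.exp (-(u ^ 2) / 2))
  simp only [neg_sq] at h1
  rw [stdNormalCDF, stdNormalCDF, h1, add_comm]
  rw [intervalIntegral.integral_Iic_add_Ioi gauss_integrable.integrableOn gauss_integrable.integrableOn]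
  exact gauss_total

lemma stdNormalCDF_zero : stdNormalCDF 0 = 1 / 2 := by
  have := stdNormalCDF_neg_add 0
  rw [neg_zero] at this
  linarith

lemma intervalInt_exp_mul {x : ℝ} (hx : x ≠ 0) (a b : ℝ) :
    ∫ u in a..b, Real.exp (x * u) = (Real.exp (x * b) - Real.exp (x * a)) / x := by
  rw [intervalIntegral.integral_comp_mul_left (fun u => Real.exp u) hx,
    integral_exp, smul_eq_mul]
  ring

lemma integrableOn_exp_mul_Iic' {x : ℝ} (hx : 0 < x) (c : ℝ) :
    IntegrableOn (fun u : ℝ => Real.exp (x * u)) (Iic c) := by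
  refine integrableOn_Iic_of_intervalIntegral_norm_bounded (Real.exp (x * c) / x) c
    (fun y => ((Real.continuous_exp.comp (continuous_const.mul continuous_id)).integrableOn_Ioc))
    tendsto_id ?_
  filter_upwards [Iic_mem_atBot c] with y _
  simp only [id_eq]
  have h : ∫ u in y..c, ‖Real.exp (x * u)‖ = (Real.exp (x * c) - Real.exp (x * y)) / x := by
    simp_rw [Real.norm_eq_abs, abs_of_pos (Real.exp_pos _)]
    exact intervalInt_exp_mul hx.ne' y c
  rw [h]
  exact div_le_div_of_nonneg_right (by linarith [(Real.exp_pos (x * y)).le]) hx.le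

lemma integral_exp_mul_Iic' {x : ℝ} (hx : 0 < x) (c : ℝ) :
    ∫ u in Iic c, Real.exp (x * u) = Real.exp (x * c) / x := by
  have h1 := integral_comp_neg_Iic c (fun u : ℝ => Real.exp (-(x * u)))
  simp only [mul_neg, neg_neg] at h1
  rw [h1]
  have h2 := integral_comp_mul_left_Ioi (fun v : ℝ => Real.exp (-v)) (-c) hx
  rw [h2, integral_exp_neg_Ioi, smul_eq_mul, show -(x * -c) = x * c by ring]
  ring

lemma stdNormalCDF_tail {x : ℝ} (hx : 0 < x) :
    stdNormalCDF (-x) ≤ Real.exp (-(x ^ 2) / 2) / x := by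
  have h2π : (1:ℝ) ≤ Real.sqrt (2 * Real.pi) := by
    rw [show (1:ℝ) = Real.sqrt 1 from (Real.sqrt_one).symm]
    exact Real.sqrt_le_sqrt (by nlinarith [Real.pi_gt_three])
  have hinv : (Real.sqrt (2 * Real.pi))⁻¹ ≤ 1 := by
    rw [inv_le_one_iff₀]
    right; exact h2π
  have hmono : ∀ u ∈ Iic (-x),
      (Real.sqrt (2 * Real.pi))⁻¹ * Real.exp (-(u ^ 2) / 2)
        ≤ Real.exp (x ^ 2 / 2) * Real.exp (x * u) := by
    intro u _
    have h1 : Real.exp (-(u ^ 2) / 2) ≤ Real.exp (x ^ 2 / 2 + x * u) := by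
      apply Real.exp_le_exp.mpr
      nlinarith [sq_nonneg (u + x)]
    calc (Real.sqrt (2 * Real.pi))⁻¹ * Real.exp (-(u ^ 2) / 2)
        ≤ 1 * Real.exp (x ^ 2 / 2 + x * u) :=
          mul_le_mul hinv h1 (Real.exp_pos _).le zero_le_one
      _ = Real.exp (x ^ 2 / 2) * Real.exp (x * u) := by rw [one_mul, Real.exp_add]
  have hInt1 : IntegrableOn
      (fun u : ℝ => (Real.sqrt (2 * Real.pi))⁻¹ * Real.exp (-(u ^ 2) / 2)) (Iic (-x)) :=
    gauss_integrable.integrableOn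
  have hInt2 : IntegrableOn
      (fun u : ℝ => Real.exp (x ^ 2 / 2) * Real.exp (x * u)) (Iic (-x)) :=
    (integrableOn_exp_mul_Iic' hx _).const_mul _
  have hle := setIntegral_mono_on hInt1 hInt2 measurableSet_Iic hmono
  rw [stdNormalCDF]
  refine hle.trans ?_
  rw [integral_const_mul, integral_exp_mul_Iic' hx, ← mul_div_assoc, ← Real.exp_add,
    show x ^ 2 / 2 + x * -x = -(x ^ 2) / 2 by ring]

lemma stdNormalCDF_tendsto_atBot : Tendsto stdNormalCDF atBot (𝓝 0) := by
  have hg : Tendsto (fun x : ℝ => (-x)⁻¹) atBot (𝓝 0) :=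
    tendsto_inv_atTop_zero.comp tendsto_neg_atBot_atTop
  refine squeeze_zero' (Eventually.of_forall fun x => stdNormalCDF_nonneg x) ?_ hg
  filter_upwards [eventually_le_atBot (-1 : ℝ)] with x hx
  have hx' : 0 < -x := by linarith
  have h1 : stdNormalCDF x ≤ Real.exp (-((-x) ^ 2) / 2) / (-x) := by
    have := stdNormalCDF_tail hx'
    rwa [neg_neg] at this
  refine h1.trans ?_
  rw [div_eq_mul_inv]
  calc Real.exp (-((-x) ^ 2) / 2) * (-x)⁻¹ ≤ 1 * (-x)⁻¹ :=
        mul_le_mul_of_nonneg_right (Real.exp_le_one_iff.mpr (by nlinarith)) (inv_nonneg.mpr hx'.le)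
    _ = (-x)⁻¹ := one_mul _

lemma stdNormalCDF_tendsto_atTop : Tendsto stdNormalCDF atTop (𝓝 1) := by
  have h : ∀ x, 1 - stdNormalCDF (-x) = stdNormalCDF x := fun x => by
    have := stdNormalCDF_neg_add x; linarith
  have h2 : Tendsto (fun x : ℝ => 1 - stdNormalCDF (-x)) atTop (𝓝 (1 - 0)) :=
    tendsto_const_nhds.sub (stdNormalCDF_tendsto_atBot.comp tendsto_neg_atTop_atBot)
  rw [sub_zero] at h2
  exact h2.congr h

theorem bridgeCDF_tendsto_of_activity (t T z : ℝ) (ht : 0 < t) (htT : t < T) (hz : 0 < z) :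
    ∀ y : ℝ, 0 < y → y < z →
      Filter.Tendsto (fun c : ℝ => bridgeCDF c t T y z) Filter.atTop
        (nhds (if T * y > t * z then 1 else if T * y = t * z then 1 / 2 else 0)) := by
  intro y hy hyz
  have hzy : 0 < z - y := sub_pos.mpr hyz
  have hP : 0 < y * z * (z - y) := by positivity
  set s : ℝ := Real.sqrt (y * z * (z - y)) with hs_def
  have hs : 0 < s := Real.sqrt_pos.mpr hP
  have hs2 : s ^ 2 = y * z * (z - y) := Real.sq_sqrt hP.le
  set a1 : ℝ := (T * y - t * z) / s with ha1_def
  set a2 : ℝ := ((2 * t - T) * y - t * z) / s with ha2_def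
  have ha2num : (2 * t - T) * y - t * z < 0 := by nlinarith
  have ha2 : a2 < 0 := div_neg_of_neg_of_pos ha2num hs
  have key : 4 * (t * (T - t)) * (y * (z - y)) ≤ ((2 * t - T) * y - t * z) ^ 2 := by
    nlinarith [sq_nonneg (t * z - T * y)]
  have hK : 2 * t * (T - t) / z ≤ a2 ^ 2 / 2 := by
    rw [ha2_def, div_pow, hs2, div_div, div_le_div_iff₀ hz (by positivity)]
    nlinarith [mul_le_mul_of_nonneg_left key hz.le]
  -- second term tends to zero
  have hg : Tendsto (fun c : ℝ => (1 - 2 * t / T) * Real.exp (2 * c ^ 2 * t * (T - t) / z) *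
      stdNormalCDF (c * a2)) atTop (𝓝 0) := by
    have hC : Tendsto (fun c : ℝ => (|1 - 2 * t / T| / (-a2)) * c⁻¹) atTop (𝓝 0) := by
      simpa using (tendsto_inv_atTop_zero (𝕜 := ℝ)).const_mul (|1 - 2 * t / T| / (-a2))
    refine squeeze_zero_norm' ?_ hC
    filter_upwards [eventually_gt_atTop (0 : ℝ)] with c hc
    have hw : 0 < c * (-a2) := mul_pos hc (neg_pos.mpr ha2)
    have h1 : stdNormalCDF (c * a2) ≤ Real.exp (-((c * (-a2)) ^ 2) / 2) / (c * (-a2)) := by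
      have := stdNormalCDF_tail hw
      rwa [show -(c * (-a2)) = c * a2 by ring] at this
    have hexp : Real.exp (2 * c ^ 2 * t * (T - t) / z) * stdNormalCDF (c * a2)
        ≤ (c * (-a2))⁻¹ := by
      calc Real.exp (2 * c ^ 2 * t * (T - t) / z) * stdNormalCDF (c * a2)
          ≤ Real.exp (2 * c ^ 2 * t * (T - t) / z) *
            (Real.exp (-((c * (-a2)) ^ 2) / 2) / (c * (-a2))) :=
            mul_le_mul_of_nonneg_left h1 (Real.exp_pos _).le
        _ = Real.exp (2 * c ^ 2 * t * (T - t) / z + -((c * (-a2)) ^ 2) / 2) * (c * (-a2))⁻¹ := by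
            rw [Real.exp_add]; ring
        _ ≤ 1 * (c * (-a2))⁻¹ := by
            refine mul_le_mul_of_nonneg_right ?_ (inv_nonneg.mpr hw.le)
            apply Real.exp_le_one_iff.mpr
            have h3 : 2 * c ^ 2 * t * (T - t) / z ≤ (c * -a2) ^ 2 / 2 := by
              calc 2 * c ^ 2 * t * (T - t) / z = c ^ 2 * (2 * t * (T - t) / z) := by ring
                _ ≤ c ^ 2 * (a2 ^ 2 / 2) := mul_le_mul_of_nonneg_left hK (sq_nonneg c)
                _ = (c * -a2) ^ 2 / 2 := by ring
            linarith
        _ = (c * (-a2))⁻¹ := one_mul _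
    rw [norm_mul, norm_mul, Real.norm_eq_abs, Real.norm_eq_abs, Real.norm_eq_abs,
      abs_of_pos (Real.exp_pos _), abs_of_nonneg (stdNormalCDF_nonneg _)]
    calc |1 - 2 * t / T| * Real.exp (2 * c ^ 2 * t * (T - t) / z) * stdNormalCDF (c * a2)
        = |1 - 2 * t / T| *
            (Real.exp (2 * c ^ 2 * t * (T - t) / z) * stdNormalCDF (c * a2)) := by ring
      _ ≤ |1 - 2 * t / T| * (c * (-a2))⁻¹ := mul_le_mul_of_nonneg_left hexp (abs_nonneg _)
      _ = |1 - 2 * t / T| / (-a2) * c⁻¹ := by rw [mul_inv]; ring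
  -- first term
  have hmain : Tendsto (fun c : ℝ => stdNormalCDF (c * a1)) atTop
      (𝓝 (if T * y > t * z then 1 else if T * y = t * z then 1 / 2 else 0)) := by
    simp only [gt_iff_lt]
    rcases lt_trichotomy (t * z) (T * y) with h | h | h
    · rw [if_pos h]
      have ha1 : 0 < a1 := div_pos (by linarith) hs
      exact stdNormalCDF_tendsto_atTop.comp (tendsto_id.atTop_mul_const ha1)
    · rw [if_neg (by simp [h]), if_pos h.symm]
      have ha1 : a1 = 0 := by rw [ha1_def, ← h]; simp
      simp only [ha1, mul_zero, stdNormalCDF_zero]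
      exact tendsto_const_nhds
    · rw [if_neg (by exact not_lt.mpr h.le), if_neg (by exact fun hc => absurd hc (ne_of_gt h).symm)]
      have ha1 : a1 < 0 := div_neg_of_neg_of_pos (by linarith) hs
      exact stdNormalCDF_tendsto_atBot.comp (tendsto_id.atTop_mul_const_of_neg ha1)
  have hsum := hmain.add hg
  rw [add_zero] at hsum
  refine hsum.congr fun c => ?_
  rw [bridgeCDF, ← hs_def, ha1_def, ha2_def, mul_div_assoc c (T * y - t * z) s,
    mul_div_assoc c ((2 * t - T) * y - t * z) s]
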